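/- For all natural numbers m, n, p, k with p ≤ n ≤ m and m − p ≤ k ≤ m + n − 2p, the following identity holds in K: v^{p(p−1) − m(m+n−p−k)} · ∑_{l=0}^{p} (−1)^l · v^{l(1 + m + n − 2p − k)} · [n−p+l choose l] · [p+k−m choose p−l] = (−1)^p · v^{(p−m)(m+n) + mk} · [m+n−p−k choose p]. -/

import Mathlib

open PowerSeries Finset

noncomputable section

/-- The base field `K = ℚ(v)`. -/
abbrev K : Type := RatFunc ℚ

/-- The indeterminate `v` of `K = ℚ(v)`. -/
noncomputable def v : K := RatFunc.X

/-- The quantum integer `[m] = (v^m - v^{-m})/(v - v⁻¹)`. -/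
noncomputable def qint (m : ℤ) : K := (v ^ m - v ^ (-m)) / (v - v⁻¹)

/-- The quantum factorial `[n]! = [n][n-1]⋯[1]`. -/
noncomputable def qfact (n : ℕ) : K := ∏ i ∈ Finset.range n, qint (i + 1)

/-- The quantum binomial coefficient `[m choose n]`. -/
noncomputable def qbinom (m n : ℤ) : K :=
  if 0 ≤ n ∧ n ≤ m then qfact m.toNat / (qfact n.toNat * qfact (m - n).toNat) else 0

/-- The ring `R = K[[X]]`. -/
abbrev R : Type := PowerSeries K

/-- `T = 1 + X`, a unit of `R`. -/
noncomputable def T : R := 1 + PowerSeries.X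

/-- `T⁻¹`, the inverse of the unit `T` in `R`. -/
noncomputable def Tinv : R := Ring.inverse T

/-- `[T;r] = (v^r T - v^{-r} T⁻¹)/(v - v⁻¹)`. -/
noncomputable def bT (r : ℤ) : R :=
  PowerSeries.C (R := K) ((v - v⁻¹)⁻¹) *
    (PowerSeries.C (R := K) (v ^ r) * T - PowerSeries.C (R := K) (v ^ (-r)) * Tinv)

/-- `[T⁻¹;r] = (v^r T⁻¹ - v^{-r} T)/(v - v⁻¹)`. -/
noncomputable def bTinv (r : ℤ) : R :=
  PowerSeries.C (R := K) ((v - v⁻¹)⁻¹) *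
    (PowerSeries.C (R := K) (v ^ r) * Tinv - PowerSeries.C (R := K) (v ^ (-r)) * T)

/-- `[T;r]_{(j)} = [T;r][T;r-1]⋯[T;r-j+1]`. -/
noncomputable def bTdesc (r : ℤ) (j : ℕ) : R := ∏ i ∈ Finset.range j, bT (r - i)

/-- `[T;r]^{(j)} = [T;r+1][T;r+2]⋯[T;r+j]`. -/
noncomputable def bTasc (r : ℤ) (j : ℕ) : R := ∏ i ∈ Finset.range j, bT (r + 1 + i)

/-- `[T⁻¹;r]_{(j)} = [T⁻¹;r][T⁻¹;r-1]⋯[T⁻¹;r-j+1]`. -/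
noncomputable def bTinvDesc (r : ℤ) (j : ℕ) : R := ∏ i ∈ Finset.range j, bTinv (r - i)

/-!
Extend `[x choose l]` to every integer top `x` as `[x][x-1]⋯[x-l+1]/[l]!`; for `x ≥ 0` this agrees
with `qbinom`. The extension satisfies upper negation `[-a-1 choose l] = (-1)^l [a+l choose l]` and
the weighted q-Vandermonde identity
`∑_l v^{x(p-l) - yl} [x choose l][y choose p-l] = [x+y choose p]`,
proved by induction on `p` and, through q-Pascal, on `x ∈ ℤ` in both directions. With
`x = p-n-1` and `y = p+k-m`, upper negation turns the left side into the alternating sum of the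
theorem and the right side into `(-1)^p [m+n-p-k choose p]`; the bounds on `p` and `k` make all
the tops nonnegative, so every binomial involved is an honest `qbinom`.
-/

lemma v_ne_zero : v ≠ 0 := RatFunc.X_ne_zero

lemma v_zpow_ne_one {j : ℤ} (hj : j ≠ 0) : v ^ j ≠ 1 := fun h => hj <| by
  classical
  have := RatFunc.inftyValuation.X_zpow ℚ j
  rwa [show RatFunc.X ^ j = 1 from h, map_one, ← WithZero.exp_zero,
    WithZero.exp_injective.eq_iff, eq_comm] at this

lemma v_sub_inv_ne_zero : v - v⁻¹ ≠ 0 := by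
  refine sub_ne_zero.mpr fun h => v_zpow_ne_one two_ne_zero ?_
  rw [zpow_two]
  nth_rewrite 1 [h]
  exact inv_mul_cancel₀ v_ne_zero

lemma qint_zero : qint 0 = 0 := by simp [qint]

lemma qint_neg (m : ℤ) : qint (-m) = -qint m := by
  rw [qint, qint, neg_neg, ← neg_div, neg_sub]

lemma qint_add (a b : ℤ) : qint (a + b) = v ^ a * qint b + v ^ (-b) * qint a := by
  simp only [qint, mul_div_assoc', ← add_div, mul_sub, ← zpow_add₀ v_ne_zero]
  ring_nf

lemma qint_ne_zero {m : ℤ} (hm : m ≠ 0) : qint m ≠ 0 := by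
  refine div_ne_zero (fun h => v_zpow_ne_one (mul_ne_zero two_ne_zero hm) ?_) v_sub_inv_ne_zero
  rw [two_mul, zpow_add₀ v_ne_zero]
  nth_rewrite 1 [sub_eq_zero.mp h]
  rw [← zpow_add₀ v_ne_zero, neg_add_cancel, zpow_zero]

lemma qfact_succ (n : ℕ) : qfact (n + 1) = qfact n * qint (n + 1) :=
  prod_range_succ _ n

lemma qfact_ne_zero (n : ℕ) : qfact n ≠ 0 :=
  prod_ne_zero_iff.mpr fun i _ => qint_ne_zero (by omega)

lemma qfact_eq_prod_mul_qfact_sub {M N : ℕ} (h : N ≤ M) :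
    qfact M = (∏ i ∈ range N, qint ((M : ℤ) - i)) * qfact (M - N) := by
  induction N with
  | zero => simp
  | succ N ih =>
    rw [ih (by omega), prod_range_succ, show M - N = M - (N + 1) + 1 by omega, qfact_succ,
      show ((M - (N + 1) : ℕ) : ℤ) + 1 = M - N by omega]
    ring

def gaussBinom (x : ℤ) (l : ℕ) : K :=
  (∏ i ∈ range l, qint (x - i)) / qfact l

lemma gaussBinom_zero_right (x : ℤ) : gaussBinom x 0 = 1 := by
  simp [gaussBinom, qfact]

lemma gaussBinom_zero_left {l : ℕ} (hl : l ≠ 0) : gaussBinom 0 l = 0 := by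
  rw [gaussBinom, prod_eq_zero (mem_range.mpr (Nat.pos_of_ne_zero hl)) (by simpa using qint_zero),
    zero_div]

lemma qbinom_eq_gaussBinom {M : ℤ} (hM : 0 ≤ M) (N : ℕ) : qbinom M N = gaussBinom M N := by
  lift M to ℕ using hM
  by_cases h : N ≤ M
  · rw [qbinom, if_pos ⟨N.cast_nonneg, by exact_mod_cast h⟩, gaussBinom,
      show ((M : ℤ) - N).toNat = M - N by omega, Int.toNat_natCast, Int.toNat_natCast,
      div_eq_div_iff (mul_ne_zero (qfact_ne_zero N) (qfact_ne_zero _)) (qfact_ne_zero N),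
      qfact_eq_prod_mul_qfact_sub h]
    ring
  · rw [qbinom, if_neg (by omega), gaussBinom,
      prod_eq_zero (mem_range.mpr (not_le.mp h)) (by rw [sub_self, qint_zero]), zero_div]

lemma gaussBinom_neg_sub_one (a : ℤ) (l : ℕ) :
    gaussBinom (-a - 1) l = (-1) ^ l * gaussBinom (a + l) l := by
  have hreflect : ∏ i ∈ range l, qint (a + 1 + i) = ∏ i ∈ range l, qint (a + l - i) := by
    rw [← prod_range_reflect (fun i => qint (a + l - i)) l]
    refine prod_congr rfl fun j hj => congrArg qint ?_
    rw [show l - 1 - j = l - (j + 1) by omega, Nat.cast_sub (by simp at hj; omega)]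
    push_cast
    ring
  have hneg :
      ∏ i ∈ range l, qint (-a - 1 - i) = (-1) ^ l * ∏ i ∈ range l, qint (a + 1 + i) := by
    rw [← card_range l, ← prod_const, card_range, ← prod_mul_distrib]
    exact prod_congr rfl fun i _ => by rw [neg_one_mul, ← qint_neg]; ring_nf
  rw [gaussBinom, gaussBinom, hneg, hreflect, mul_div_assoc]

lemma gaussBinom_succ (x : ℤ) (l : ℕ) :
    gaussBinom x (l + 1) =
      v ^ ((l : ℤ) + 1) * gaussBinom (x - 1) (l + 1) +
        v ^ ((l : ℤ) + 1 - x) * gaussBinom (x - 1) l := by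
  have hprod :
      ∏ i ∈ range (l + 1), qint (x - i) = (∏ i ∈ range l, qint (x - 1 - i)) * qint x := by
    rw [prod_range_succ']
    push_cast
    simp_rw [sub_add_eq_sub_sub_swap, sub_zero]
  have hx : qint x =
      v ^ ((l : ℤ) + 1) * qint (x - 1 - l) + v ^ ((l : ℤ) + 1 - x) * qint ((l : ℤ) + 1) := by
    have h := qint_add ((l : ℤ) + 1) (x - 1 - l)
    rwa [show (l : ℤ) + 1 + (x - 1 - l) = x by ring,
      show -(x - 1 - l) = (l : ℤ) + 1 - x by ring] at h
  have := qint_ne_zero (m := (l : ℤ) + 1) (by omega)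
  have := qfact_ne_zero l
  rw [gaussBinom, gaussBinom, gaussBinom, hprod, prod_range_succ, qfact_succ, hx]
  field_simp

lemma v_zpow_mul_zpow_eq {a b c d : ℤ} (h : a + b = c + d) : v ^ a * v ^ b = v ^ c * v ^ d := by
  rw [← zpow_add₀ v_ne_zero, ← zpow_add₀ v_ne_zero, h]

def qVandermondeSum (p : ℕ) (x y : ℤ) : K :=
  ∑ l ∈ range (p + 1), v ^ (x * ((p : ℤ) - l) - y * l) * gaussBinom x l * gaussBinom y (p - l)

lemma qVandermondeSum_succ (p : ℕ) (x y : ℤ) :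
    qVandermondeSum (p + 1) x y =
      v ^ ((p : ℤ) + 1) * qVandermondeSum (p + 1) (x - 1) y +
        v ^ ((p : ℤ) + 1 - x - y) * qVandermondeSum p (x - 1) y := by
  simp only [qVandermondeSum]
  rw [sum_range_succ', sum_range_succ' _ (p + 1), mul_add, mul_sum, mul_sum, add_right_comm,
    ← sum_add_distrib]
  congr 1
  · refine sum_congr rfl fun l hl => ?_
    rw [gaussBinom_succ, show p + 1 - (l + 1) = p - l by omega]
    have e₁ := v_zpow_mul_zpow_eq (a := x * ((p + 1 : ℕ) - (l + 1 : ℕ) : ℤ) - y * (l + 1 : ℕ))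
      (b := (l : ℤ) + 1) (c := (p : ℤ) + 1)
      (d := (x - 1) * ((p + 1 : ℕ) - (l + 1 : ℕ) : ℤ) - y * (l + 1 : ℕ)) (by push_cast; ring)
    have e₂ := v_zpow_mul_zpow_eq (a := x * ((p + 1 : ℕ) - (l + 1 : ℕ) : ℤ) - y * (l + 1 : ℕ))
      (b := (l : ℤ) + 1 - x) (c := (p : ℤ) + 1 - x - y)
      (d := (x - 1) * ((p : ℤ) - l) - y * l) (by push_cast; ring)
    linear_combination (gaussBinom (x - 1) (l + 1) * gaussBinom y (p - l)) * e₁ +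
      (gaussBinom (x - 1) l * gaussBinom y (p - l)) * e₂
  · rw [gaussBinom_zero_right, gaussBinom_zero_right, mul_one, mul_one, ← mul_assoc,
      ← zpow_add₀ v_ne_zero]
    congr 2
    push_cast
    ring

lemma qVandermondeSum_zero_left (p : ℕ) (y : ℤ) : qVandermondeSum p 0 y = gaussBinom y p := by
  rw [qVandermondeSum, sum_eq_single_of_mem 0 (by simp) fun l _ hl => by
    rw [gaussBinom_zero_left hl, mul_zero, zero_mul]]
  simp [gaussBinom_zero_right]

theorem qVandermondeSum_eq_gaussBinom (p : ℕ) :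
    ∀ x y : ℤ, qVandermondeSum p x y = gaussBinom (x + y) p := by
  induction p with
  | zero => simp [qVandermondeSum, gaussBinom_zero_right]
  | succ p ih =>
    have hshift (x y : ℤ) : qVandermondeSum (p + 1) x y = gaussBinom (x + y) (p + 1) ↔
        qVandermondeSum (p + 1) (x - 1) y = gaussBinom (x - 1 + y) (p + 1) := by
      rw [qVandermondeSum_succ, gaussBinom_succ, ih, show x - 1 + y = x + y - 1 by ring,
        show (p : ℤ) + 1 - x - y = p + 1 - (x + y) by ring, add_left_inj,
        mul_right_inj' (zpow_ne_zero _ v_ne_zero)]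
    intro x y
    induction x using Int.induction_on with
    | zero => rw [qVandermondeSum_zero_left, zero_add]
    | succ i ihx => exact (hshift _ y).mpr (by rwa [add_sub_cancel_right])
    | pred i ihx => exact (hshift _ y).mp ihx

lemma sum_neg_one_pow_mul_gaussBinom (a b : ℤ) (p : ℕ) :
    ∑ l ∈ range (p + 1), (-1 : K) ^ l * v ^ ((l : ℤ) * (1 + a - b)) *
        gaussBinom (a + l) l * gaussBinom b (p - l) =
      (-1) ^ p * v ^ ((a + 1) * p) * gaussBinom (a - b + p) p := by
  have h := qVandermondeSum_eq_gaussBinom p (-a - 1) b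
  rw [show -a - 1 + b = -(a - b) - 1 by ring, gaussBinom_neg_sub_one, qVandermondeSum] at h
  rw [mul_right_comm, ← h, sum_mul]
  refine sum_congr rfl fun l _ => ?_
  have e : v ^ ((-a - 1) * ((p : ℤ) - l) - b * l) * v ^ ((a + 1) * p) =
      v ^ ((l : ℤ) * (1 + a - b)) := by
    rw [← zpow_add₀ v_ne_zero]
    ring_nf
  rw [gaussBinom_neg_sub_one]
  linear_combination (-(-1) ^ l * gaussBinom (a + l) l * gaussBinom b (p - l)) * e

theorem stmt8_general (m n p k : ℕ) (hpn : p ≤ n)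
    (hk1 : (m : ℤ) - p ≤ k) (hk2 : (k : ℤ) ≤ (m : ℤ) + n - 2 * p) :
    v ^ ((p : ℤ) * ((p : ℤ) - 1) - (m : ℤ) * ((m : ℤ) + n - p - k)) *
        ∑ l ∈ Finset.range (p + 1),
          (-1 : K) ^ l * v ^ ((l : ℤ) * (1 + (m : ℤ) + n - 2 * p - k)) *
            qbinom ((n : ℤ) - p + l) l * qbinom ((p : ℤ) + k - m) ((p : ℤ) - l) =
      (-1 : K) ^ p * v ^ (((p : ℤ) - m) * ((m : ℤ) + n) + (m : ℤ) * k) *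
        qbinom ((m : ℤ) + n - p - k) p := by
  have hterm : ∀ l ∈ range (p + 1),
      (-1 : K) ^ l * v ^ ((l : ℤ) * (1 + (m : ℤ) + n - 2 * p - k)) *
          qbinom ((n : ℤ) - p + l) l * qbinom ((p : ℤ) + k - m) ((p : ℤ) - l) =
        (-1 : K) ^ l * v ^ ((l : ℤ) * (1 + ((n : ℤ) - p) - (p + k - m))) *
          gaussBinom ((n : ℤ) - p + l) l * gaussBinom ((p : ℤ) + k - m) (p - l) := by
    intro l hl
    rw [← Nat.cast_sub (Nat.lt_succ_iff.mp (mem_range.mp hl)), qbinom_eq_gaussBinom (by omega),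
      qbinom_eq_gaussBinom (by omega)]
    ring_nf
  have hexp : v ^ ((p : ℤ) * ((p : ℤ) - 1) - (m : ℤ) * ((m : ℤ) + n - p - k)) *
      v ^ (((n : ℤ) - p + 1) * p) = v ^ (((p : ℤ) - m) * ((m : ℤ) + n) + (m : ℤ) * k) := by
    rw [← zpow_add₀ v_ne_zero]
    ring_nf
  rw [sum_congr rfl hterm, sum_neg_one_pow_mul_gaussBinom,
    show (n : ℤ) - p - (p + k - m) + p = m + n - p - k by ring, ← qbinom_eq_gaussBinom (by omega)]
  linear_combination ((-1 : K) ^ p * qbinom ((m : ℤ) + n - p - k) p) * hexp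

/-- the Clebsch-Gordan coefficient identity of Lemma `CGspecialcase`. -/
theorem stmt8 (m n p k : ℕ) (hpn : p ≤ n) (hnm : n ≤ m)
    (hk1 : (m : ℤ) - p ≤ k) (hk2 : (k : ℤ) ≤ (m : ℤ) + n - 2 * p) :
    v ^ ((p : ℤ) * ((p : ℤ) - 1) - (m : ℤ) * ((m : ℤ) + n - p - k)) *
        ∑ l ∈ Finset.range (p + 1),
          (-1 : K) ^ l * v ^ ((l : ℤ) * (1 + (m : ℤ) + n - 2 * p - k)) *
            qbinom ((n : ℤ) - p + l) l * qbinom ((p : ℤ) + k - m) ((p : ℤ) - l) =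
      (-1 : K) ^ p * v ^ (((p : ℤ) - m) * ((m : ℤ) + n) + (m : ℤ) * k) *
        qbinom ((m : ℤ) + n - p - k) p :=
  stmt8_general m n p k hpn hk1 hk2
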